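/- arXiv:1608.06475 — 2 statements merged into one kernel-verified Lean document; each statement's English description precedes it below -/
import Mathlib

section
/- Let Υ be a real symmetric positive semidefinite m×m matrix and M an m×n real matrix satisfying the regularity condition Υ Υ† M = M, where Υ† denotes the Moore-Penrose pseudoinverse. Then for every m×n matrix K, M'Υ†M + M'K + K'M + K'ΥK is positive semidefinite, and M'Υ†M = −M'K − K'M − K'ΥK when K = −Υ†M. -/
open Matrix

/-- `Ad` is the Moore-Penrose pseudoinverse of `A`. -/
def IsMoorePenrose {m : ℕ} (A Ad : Matrix (Fin m) (Fin m) ℝ) : Prop :=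
  A * Ad * A = A ∧ Ad * A * Ad = Ad ∧ (A * Ad)ᵀ = A * Ad ∧ (Ad * A)ᵀ = Ad * A

theorem pinv_completion_of_squares {m n : ℕ} (Υ Υd : Matrix (Fin m) (Fin m) ℝ)
    (hΥ : Υ.PosSemidef) (hmp : IsMoorePenrose Υ Υd)
    (M : Matrix (Fin m) (Fin n) ℝ) (hreg : Υ * Υd * M = M) :
    (∀ K : Matrix (Fin m) (Fin n) ℝ,
      (Mᵀ * Υd * M + Mᵀ * K + Kᵀ * M + Kᵀ * Υ * K).PosSemidef) ∧
    (Mᵀ * Υd * M =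
      -(Mᵀ * (-(Υd * M))) - (-(Υd * M))ᵀ * M - (-(Υd * M))ᵀ * Υ * (-(Υd * M))) := by
  have ht : Υᵀ = Υ := by
    have := hΥ.1
    rw [Matrix.IsHermitian, Matrix.conjTranspose_eq_transpose_of_trivial] at this
    exact this
  -- Υdᵀ * Υ = Υ * Υd
  have hS : Υdᵀ * Υ = Υ * Υd := by
    have h := hmp.2.2.1
    calc Υdᵀ * Υ = Υdᵀ * Υᵀ := by rw [ht]
      _ = (Υ * Υd)ᵀ := by rw [Matrix.transpose_mul]
      _ = Υ * Υd := h
  -- Mᵀ * (Υ * Υd) = Mᵀ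
  have hA : Mᵀ * (Υ * Υd) = Mᵀ := by
    have h := congrArg Matrix.transpose hreg
    rw [Matrix.transpose_mul, Matrix.transpose_mul, ht] at h
    rw [← hS]; exact h
  have key : ∀ K : Matrix (Fin m) (Fin n) ℝ,
      Mᵀ * Υd * M + Mᵀ * K + Kᵀ * M + Kᵀ * Υ * K
        = (Υd * M + K)ᵀ * Υ * (Υd * M + K) := by
    intro K
    symm
    have e1 : Mᵀ * Υdᵀ * Υ = Mᵀ := by
      rw [Matrix.mul_assoc, hS, hA]
    calc (Υd * M + K)ᵀ * Υ * (Υd * M + K)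
        = (Mᵀ * Υdᵀ + Kᵀ) * Υ * (Υd * M + K) := by
          rw [Matrix.transpose_add, Matrix.transpose_mul]
      _ = Mᵀ * Υdᵀ * Υ * (Υd * M) + Mᵀ * Υdᵀ * Υ * K
          + (Kᵀ * Υ * (Υd * M) + Kᵀ * Υ * K) := by
          rw [Matrix.add_mul, Matrix.add_mul, Matrix.mul_add, Matrix.mul_add]
      _ = Mᵀ * Υd * M + Mᵀ * K + Kᵀ * M + Kᵀ * Υ * K := by
          rw [e1]
          have e2 : Kᵀ * Υ * (Υd * M) = Kᵀ * M := by
            rw [Matrix.mul_assoc, ← Matrix.mul_assoc Υ, hreg]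
          rw [e2, ← Matrix.mul_assoc Mᵀ Υd M]
          abel
  constructor
  · intro K
    rw [key K]
    exact hΥ.conjTranspose_mul_mul_same (Υd * M + K)
  · have h := key (-(Υd * M))
    have : Mᵀ * Υd * M + Mᵀ * (-(Υd * M)) + (-(Υd * M))ᵀ * M
        + (-(Υd * M))ᵀ * Υ * (-(Υd * M)) = 0 := by
      rw [h]
      simp
    linear_combination (norm := abel) this
end

section
/- Let U be a real orthogonal 2n×2n matrix and P a symmetric positive semidefinite 2n×2n matrix such that U'PU = [[0,0],[0,P2]] with P2 symmetric positive definite of size k. Let A be a 2n×2n matrix such that 0 = Q + A'P + PA + C1'PC1 + C2'PC2 with Q symmetric positive semidefinite, and write U'AU = [[A11,A12],[A21,A22]], U'CiU = [[Ci11,Ci12],[Ci21,Ci22]] (i=1,2) and U'QU = [[Q1,Q12],[Q12',Q2]] conformally with the k-partition. Then Q1 = 0, Q12 = 0, A21 = 0, C1_{21} = 0, C2_{21} = 0, and 0 = Q2 + A22'P2 + P2 A22 + (C1_{22})'P2 C1_{22} + (C2_{22})'P2 C2_{22}. -/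
open Matrix

lemma mulVec_zero_forall {m n : ℕ} {M : Matrix (Fin m) (Fin n) ℝ}
    (h : ∀ x, M *ᵥ x = 0) : M = 0 := by
  ext i j
  have := congrFun (h (Pi.single j 1)) i
  simpa [Matrix.mulVec_single] using this

lemma quad_conj_eq {m n : ℕ} (P : Matrix (Fin m) (Fin m) ℝ)
    (C : Matrix (Fin m) (Fin n) ℝ) (x : Fin n → ℝ) :
    x ⬝ᵥ (Cᵀ * P * C) *ᵥ x = (C *ᵥ x) ⬝ᵥ P *ᵥ (C *ᵥ x) := by
  rw [← Matrix.mulVec_mulVec, ← Matrix.mulVec_mulVec, Matrix.dotProduct_mulVec,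
    Matrix.vecMul_transpose]

lemma quad_conj_nonneg {m n : ℕ} {P : Matrix (Fin m) (Fin m) ℝ} (hP : P.PosSemidef)
    (C : Matrix (Fin m) (Fin n) ℝ) (x : Fin n → ℝ) :
    0 ≤ x ⬝ᵥ (Cᵀ * P * C) *ᵥ x := by
  rw [quad_conj_eq]
  simpa using hP.dotProduct_mulVec_nonneg (C *ᵥ x)

lemma aux_conj_zero {m n : ℕ} {P : Matrix (Fin m) (Fin m) ℝ} (hP : P.PosDef)
    {C : Matrix (Fin m) (Fin n) ℝ}
    (h : ∀ x : Fin n → ℝ, x ⬝ᵥ (Cᵀ * P * C) *ᵥ x = 0) : C = 0 := by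
  apply mulVec_zero_forall
  intro x
  by_contra hx
  have h1 := hP.dotProduct_mulVec_pos hx
  have h2 := h x
  rw [quad_conj_eq] at h2
  simp only [star_trivial] at h1
  exact absurd h2 (ne_of_gt h1)

theorem lyapunov_block_reduction {a b : ℕ}
    (U P A C1 C2 Q : Matrix (Fin a ⊕ Fin b) (Fin a ⊕ Fin b) ℝ)
    (hU : Uᵀ * U = 1) (hP : P.PosSemidef) (hQ : Q.PosSemidef)
    (P2 : Matrix (Fin b) (Fin b) ℝ) (hP2 : P2.PosDef)
    (hPU : Uᵀ * P * U = Matrix.fromBlocks 0 0 0 P2)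
    (hly : 0 = Q + Aᵀ * P + P * A + C1ᵀ * P * C1 + C2ᵀ * P * C2)
    (A11 : Matrix (Fin a) (Fin a) ℝ) (A12 : Matrix (Fin a) (Fin b) ℝ)
    (A21 : Matrix (Fin b) (Fin a) ℝ) (A22 : Matrix (Fin b) (Fin b) ℝ)
    (hA : Uᵀ * A * U = Matrix.fromBlocks A11 A12 A21 A22)
    (C111 : Matrix (Fin a) (Fin a) ℝ) (C112 : Matrix (Fin a) (Fin b) ℝ)
    (C121 : Matrix (Fin b) (Fin a) ℝ) (C122 : Matrix (Fin b) (Fin b) ℝ)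
    (hC1 : Uᵀ * C1 * U = Matrix.fromBlocks C111 C112 C121 C122)
    (C211 : Matrix (Fin a) (Fin a) ℝ) (C212 : Matrix (Fin a) (Fin b) ℝ)
    (C221 : Matrix (Fin b) (Fin a) ℝ) (C222 : Matrix (Fin b) (Fin b) ℝ)
    (hC2 : Uᵀ * C2 * U = Matrix.fromBlocks C211 C212 C221 C222)
    (Q1 : Matrix (Fin a) (Fin a) ℝ) (Q12 : Matrix (Fin a) (Fin b) ℝ)
    (Q2 : Matrix (Fin b) (Fin b) ℝ)
    (hQb : Uᵀ * Q * U = Matrix.fromBlocks Q1 Q12 Q12ᵀ Q2) :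
    Q1 = 0 ∧ Q12 = 0 ∧ A21 = 0 ∧ C121 = 0 ∧ C221 = 0 ∧
      0 = Q2 + A22ᵀ * P2 + P2 * A22 + C122ᵀ * P2 * C122 + C222ᵀ * P2 * C222 := by
  have hUU : U * Uᵀ = 1 := mul_eq_one_comm.mp hU
  have conj : ∀ X Y : Matrix (Fin a ⊕ Fin b) (Fin a ⊕ Fin b) ℝ,
      Uᵀ * (X * Y) * U = (Uᵀ * X * U) * (Uᵀ * Y * U) := by
    intro X Y
    have h : (Uᵀ * X * U) * (Uᵀ * Y * U) = Uᵀ * (X * ((U * Uᵀ) * (Y * U))) := by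
      simp only [Matrix.mul_assoc]
    rw [h, hUU, Matrix.one_mul]
    simp only [Matrix.mul_assoc]
  have conjT : ∀ X : Matrix (Fin a ⊕ Fin b) (Fin a ⊕ Fin b) ℝ,
      Uᵀ * Xᵀ * U = (Uᵀ * X * U)ᵀ := by
    intro X
    simp [Matrix.transpose_mul, Matrix.mul_assoc]
  have h0 : Uᵀ * Q * U + Uᵀ * (Aᵀ * P) * U + Uᵀ * (P * A) * U
      + Uᵀ * (C1ᵀ * P * C1) * U + Uᵀ * (C2ᵀ * P * C2) * U = 0 := by
    have h := congrArg (fun X => Uᵀ * X * U) hly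
    simp only [Matrix.mul_zero, Matrix.zero_mul, Matrix.mul_add, Matrix.add_mul] at h
    rw [← h]
  rw [conj Aᵀ P, conjT A, conj P A, conj (C1ᵀ * P) C1, conj C1ᵀ P, conjT C1,
    conj (C2ᵀ * P) C2, conj C2ᵀ P, conjT C2, hA, hPU, hQb, hC1, hC2] at h0
  simp only [Matrix.fromBlocks_transpose, Matrix.fromBlocks_multiply,
    Matrix.fromBlocks_add] at h0
  rw [show (0 : Matrix (Fin a ⊕ Fin b) (Fin a ⊕ Fin b) ℝ)
      = Matrix.fromBlocks 0 0 0 0 by simp, Matrix.fromBlocks_inj] at h0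
  obtain ⟨e11, e12, e21, e22⟩ := h0
  simp only [Matrix.mul_zero, Matrix.zero_mul, add_zero, zero_add,
    Matrix.mul_one] at e11 e12 e21 e22
  -- PSD of conjugated Q
  have hQhat : (Matrix.fromBlocks Q1 Q12 Q12ᵀ Q2).PosSemidef := by
    rw [← hQb]
    have := hQ.conjTranspose_mul_mul_same U
    simpa using this
  have hQ1 : Q1.PosSemidef := hQhat.submatrix Sum.inl
  -- quadratic forms in the (1,1) block vanish
  have hquad : ∀ x : Fin a → ℝ, x ⬝ᵥ Q1 *ᵥ x = 0 ∧
      x ⬝ᵥ (C121ᵀ * P2 * C121) *ᵥ x = 0 ∧ x ⬝ᵥ (C221ᵀ * P2 * C221) *ᵥ x = 0 := by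
    intro x
    have hsum : x ⬝ᵥ Q1 *ᵥ x + x ⬝ᵥ (C121ᵀ * P2 * C121) *ᵥ x
        + x ⬝ᵥ (C221ᵀ * P2 * C221) *ᵥ x = 0 := by
      have := congrArg (fun M => x ⬝ᵥ M *ᵥ x) e11
      simpa [Matrix.add_mulVec, dotProduct_add] using this
    have h1 : 0 ≤ x ⬝ᵥ Q1 *ᵥ x := by simpa using hQ1.dotProduct_mulVec_nonneg x
    have h2 := quad_conj_nonneg hP2.posSemidef C121 x
    have h3 := quad_conj_nonneg hP2.posSemidef C221 x
    refine ⟨by linarith, by linarith, by linarith⟩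
  have hC121 : C121 = 0 := aux_conj_zero hP2 (fun x => (hquad x).2.1)
  have hC221 : C221 = 0 := aux_conj_zero hP2 (fun x => (hquad x).2.2)
  have hQ1z : Q1 = 0 := by
    apply mulVec_zero_forall
    intro x
    exact (hQ1.dotProduct_mulVec_zero_iff x).mp (by simpa using (hquad x).1)
  -- Q12 = 0 via factorization of the PSD block matrix
  have hQ12 : Q12 = 0 := by
    obtain ⟨B, hB⟩ : ∃ B : Matrix (Fin a ⊕ Fin b) (Fin a ⊕ Fin b) ℝ,
        Matrix.fromBlocks Q1 Q12 Q12ᵀ Q2 = Bᴴ * B := by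
      open scoped MatrixOrder in exact CStarAlgebra.nonneg_iff_eq_star_mul_self.mp hQhat.nonneg
    set B1 := B.submatrix id Sum.inl with hB1
    set B2 := B.submatrix id Sum.inr with hB2
    have h11 : Q1 = B1ᴴ * B1 := by
      ext i j
      have := congrFun (congrFun hB (Sum.inl i)) (Sum.inl j)
      simpa [Matrix.fromBlocks, Matrix.mul_apply, Matrix.conjTranspose_apply, hB1] using this
    have h12 : Q12 = B1ᴴ * B2 := by
      ext i j
      have := congrFun (congrFun hB (Sum.inl i)) (Sum.inr j)
      simpa [Matrix.fromBlocks, Matrix.mul_apply, Matrix.conjTranspose_apply, hB1, hB2] using this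
    have hB1z : B1 = 0 := by
      rw [← Matrix.conjTranspose_mul_self_eq_zero, ← h11, hQ1z]
    rw [h12, hB1z]
    simp
  have hA21 : A21 = 0 := by
    have h : A21ᵀ * P2 = 0 := by
      rw [hQ12, hC121, hC221] at e12
      simpa using e12
    have := congrArg (fun M => M * P2⁻¹) h
    simp only [Matrix.mul_assoc, Matrix.mul_nonsing_inv _ (isUnit_iff_ne_zero.mpr hP2.det_pos.ne'),
      Matrix.mul_one, Matrix.zero_mul] at this
    exact Matrix.transpose_eq_zero.mp this
  refine ⟨hQ1z, hQ12, hA21, hC121, hC221, ?_⟩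
  exact e22.symm
end
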